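/- Let {P_{j,m}(ε,t,A)} be a secular-coefficient family with renormalized amplitudes 𝒜_j(ε,t,A) = P_{j,m_j}(ε,t,A). Then the relation between bare and renormalized amplitudes can be inverted explicitly: for every 1 ≤ j ≤ n, P_{j,m_j}(ε, −t, 𝒜(ε, t, A)) = A_j, as an identity in ℂ[t,A][[ε]] (in particular the left-hand side is independent of t). -/

import Mathlib

/-!
Write `Y(t, A)` for the formal solution `Σ_m P_{·,m} e^{imt}`. The substitution `t ↦ t - s`,
`A ↦ 𝒜(ε, s, A)` commutes with `∂_t` and fixes the coefficients of `V`, so it carries `Y` to a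
second formal solution over `ℂ[t, s, A]`, next to `Y(t, A)` itself; by (b) and (c) the resonant
modes of both equal `𝒜(ε, s, A)` at `t = s`. At each order in `ε` the right-hand sides of the mode
equations involve only lower orders, so the difference `d` of the two solutions at that order
satisfies `∂_t d + i(m - m_j) d = 0`: off resonance this forces `d = 0`, at resonance `d` does not
depend on `t` and vanishes at `t = s`. Hence `P_{j,m}(ε, t - s, 𝒜(ε, s, A)) = P_{j,m}(ε, t, A)`, and
setting `t = 0`, then renaming `s` to `t`, gives
`P_{j,m_j}(ε, -t, 𝒜(ε, t, A)) = P_{j,m_j}(ε, 0, A) = A_j`.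
-/

noncomputable section

open Polynomial

/-- Finite `R`-linear combinations of Fourier modes `e^{i m t}` (`m : ℤ`):
the mode-`m` coefficient of `x` is `x m : R`. -/
abbrev ModeRing (R : Type) [CommRing R] : Type := AddMonoidAlgebra R ℤ

/-- Formal power series in `ε` whose coefficients are finite Fourier sums with
coefficients in `R`. -/
abbrev EpsSeries (R : Type) [CommRing R] : Type := PowerSeries (ModeRing R)

/-- The mode `e^{i t}`, as a unit of `EpsSeries R` (inverse `e^{-i t}`). -/
def zUnit (R : Type) [CommRing R] : (EpsSeries R)ˣ where
  val := PowerSeries.C (AddMonoidAlgebra.single 1 1)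
  inv := PowerSeries.C (AddMonoidAlgebra.single (-1) 1)
  val_inv := by
    rw [← map_mul, AddMonoidAlgebra.single_mul_single]
    norm_num [AddMonoidAlgebra.one_def]
  inv_val := by
    rw [← map_mul, AddMonoidAlgebra.single_mul_single]
    norm_num [AddMonoidAlgebra.one_def]

/-- Evaluation of a Laurent polynomial in `z` (an element of `ℂ[z,z⁻¹] = AddMonoidAlgebra ℂ ℤ`)
at `z = e^{i t}`, landing in `EpsSeries R`. -/
def zEval (R : Type) [CommRing R] [Algebra ℂ R] : AddMonoidAlgebra ℂ ℤ →+* EpsSeries R :=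
  AddMonoidAlgebra.liftNCRingHom
    ((PowerSeries.C (R := _)).comp (AddMonoidAlgebra.singleZeroRingHom.comp (algebraMap ℂ R)))
    ((Units.coeHom _).comp (zpowersHom _ (zUnit R)))
    (fun _ _ => Commute.all _ _)

/-- Evaluation of `V ∈ ℂ[ε, z, z⁻¹, y₁, …, yₙ]` (encoded as a polynomial in the `y`-variables
with coefficients in `ℂ[z,z⁻¹][ε]`) at `z = e^{i t}`, `ε = ε` (the power series variable)
and given formal series values of the `y`-variables. -/
def VEval {n : ℕ} (R : Type) [CommRing R] [Algebra ℂ R]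
    (V : MvPolynomial (Fin n) (Polynomial (AddMonoidAlgebra ℂ ℤ)))
    (y : Fin n → EpsSeries R) : EpsSeries R :=
  MvPolynomial.eval₂ (Polynomial.eval₂RingHom (zEval R) PowerSeries.X) y V

/-- The polynomial ring `ℂ[t, A₁, …, Aₙ]`: the variable `none` is `t`, `some i` is `Aᵢ`. -/
abbrev AmpRing (n : ℕ) : Type := MvPolynomial (Option (Fin n)) ℂ

/-- The secular coefficient `P_{j,m}(ε,t,A) ∈ ℂ[t,A][[ε]]` of a family
`Q j = Σ_k ε^k Σ_m P_{j,m}^{(k)} e^{imt}`. -/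
def Pc {n : ℕ} (Q : Fin n → EpsSeries (AmpRing n)) (j : Fin n) (m : ℤ) :
    PowerSeries (AmpRing n) :=
  PowerSeries.mk fun k => (PowerSeries.coeff (R := ModeRing (AmpRing n)) k (Q j)).coeff m

/-- A secular-coefficient family for the system `dy_j/dt = i m_j y_j + ε V_j(ε,e^{±it},y)`:
(a) at each `ε`-order only finitely many modes are nonzero (built into `ModeRing`);
(b) the `ε⁰`-coefficient of `P_{j,m}` is `A_j δ_{m,m_j}`;
(c) for `k ≥ 1` the `ε^k`-coefficient of the resonant `P_{j,m_j}` vanishes at `t = 0`;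
(d) the differential equation holds order by order in `ε` and mode by mode in `e^{imt}`:
`∂_t P_{j,m} + i(m-m_j) P_{j,m} = [ε V_j(ε, e^{±it}, Σ_l P_{·,l} e^{ilt})]_{e^{imt}}`. -/
structure IsSecularFamily {n : ℕ} (mvec : Fin n → ℤ)
    (V : Fin n → MvPolynomial (Fin n) (Polynomial (AddMonoidAlgebra ℂ ℤ)))
    (Q : Fin n → EpsSeries (AmpRing n)) : Prop where
  coeff_zero : ∀ j, PowerSeries.coeff (R := ModeRing (AmpRing n)) 0 (Q j)
      = AddMonoidAlgebra.single (mvec j) (MvPolynomial.X (some j))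
  resonant_vanish : ∀ (j : Fin n) (k : ℕ), 1 ≤ k →
    MvPolynomial.aeval
      (fun v : Option (Fin n) => Option.elim v (0 : AmpRing n) (fun i => MvPolynomial.X (some i)))
      ((PowerSeries.coeff (R := ModeRing (AmpRing n)) k (Q j)).coeff (mvec j)) = 0
  ode : ∀ (j : Fin n) (m : ℤ),
    (PowerSeries.mk fun k =>
        MvPolynomial.pderiv none ((PowerSeries.coeff (R := ModeRing (AmpRing n)) k (Q j)).coeff m))
      + PowerSeries.C (MvPolynomial.C (Complex.I * ((m : ℂ) - (mvec j : ℂ)))) * Pc Q j m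
      = PowerSeries.mk fun k =>
          (PowerSeries.coeff (R := ModeRing (AmpRing n)) k
            (PowerSeries.X * VEval (AmpRing n) (V j) Q)).coeff m

/-- The polynomial ring `ℂ[t, s, A₁, …, Aₙ]`: `none` is `t`, `some none` is `s`,
`some (some i)` is `Aᵢ`. -/
abbrev AmpRing2 (n : ℕ) : Type := MvPolynomial (Option (Option (Fin n))) ℂ

/-- The inclusion `ℂ[t,A] → ℂ[t,s,A]`. -/
def embedTA {n : ℕ} : AmpRing n →+* AmpRing2 n :=
  (MvPolynomial.rename (Option.map (some : Fin n → Option (Fin n)))).toRingHom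

/-- The map `ℂ[t,A] → ℂ[t,s,A]` renaming `t` to `s`. -/
def renameTS {n : ℕ} : AmpRing n →+* AmpRing2 n :=
  (MvPolynomial.rename
    (fun v : Option (Fin n) => Option.elim v (some none) (fun i => some (some i)))).toRingHom

/-- Substitution of power series (with nontrivial `ε⁰`-part) for the coefficient variables of a
power series: `(substSeries φ p) = Σ_k ε^k · φ(coeff_k p)`; at each `ε`-order this is a finite
sum. -/
def substSeries {R R' : Type} [CommRing R] [CommRing R'] (φ : R →+* PowerSeries R')
    (p : PowerSeries R) : PowerSeries R' :=
  PowerSeries.mk fun K => ∑ k ∈ Finset.range (K + 1),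
    PowerSeries.coeff (R := R') (K - k) (φ (PowerSeries.coeff (R := R) k p))

/-- The renormalized amplitude `𝒜_i(ε,s,A) = P_{i,m_i}(ε,s,A)`, as an element of
`ℂ[t,s,A][[ε]]` (the `t`-variable of `P` renamed to `s`). -/
def renAmpS {n : ℕ} (mvec : Fin n → ℤ) (Q : Fin n → EpsSeries (AmpRing n)) (i : Fin n) :
    PowerSeries (AmpRing2 n) :=
  PowerSeries.map renameTS (Pc Q i (mvec i))

/-- The substitution `t ↦ t - s`, `A_i ↦ 𝒜_i(ε,s,A)`, as a ring map
`ℂ[t,A] → ℂ[t,s,A][[ε]]`. -/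
def substTA {n : ℕ} (mvec : Fin n → ℤ) (Q : Fin n → EpsSeries (AmpRing n)) :
    AmpRing n →+* PowerSeries (AmpRing2 n) :=
  MvPolynomial.eval₂Hom ((PowerSeries.C (R := AmpRing2 n)).comp MvPolynomial.C)
    (fun v : Option (Fin n) => Option.elim v
      (PowerSeries.C (MvPolynomial.X none - MvPolynomial.X (some none)))
      (fun i => renAmpS mvec Q i))

/-- The substitution `t ↦ -t`, `A_i ↦ 𝒜_i(ε,t,A)`, as a ring map `ℂ[t,A] → ℂ[t,A][[ε]]`. -/
def substInv {n : ℕ} (mvec : Fin n → ℤ) (Q : Fin n → EpsSeries (AmpRing n)) :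
    AmpRing n →+* PowerSeries (AmpRing n) :=
  MvPolynomial.eval₂Hom ((PowerSeries.C (R := AmpRing n)).comp MvPolynomial.C)
    (fun v : Option (Fin n) => Option.elim v
      (PowerSeries.C (-MvPolynomial.X none))
      (fun i => Pc Q i (mvec i)))

section SubstSeries

open PowerSeries

variable {R R' R'' : Type} [CommRing R] [CommRing R'] [CommRing R'']

lemma coeff_substSeries (φ : R →+* PowerSeries R') (p : PowerSeries R) (K : ℕ) :
    coeff K (substSeries φ p) = ∑ k ∈ Finset.range (K + 1), coeff (K - k) (φ (coeff k p)) := by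
  simp [substSeries]

lemma coeff_eval₂_X (φ : R →+* PowerSeries R') (f : R[X]) (K : ℕ) :
    coeff K (f.eval₂ φ PowerSeries.X)
      = ∑ k ∈ Finset.range (K + 1), coeff (K - k) (φ (f.coeff k)) := by
  induction f using Polynomial.induction_on' with
  | add f g hf hg =>
    simp only [eval₂_add, map_add, hf, hg, Polynomial.coeff_add, Finset.sum_add_distrib]
  | monomial k a =>
    simp only [eval₂_monomial, PowerSeries.coeff_mul_X_pow', Polynomial.coeff_monomial]
    split_ifs with hk <;> simp [apply_ite, hk]

lemma coeff_substSeries_eq_coeff_eval₂ (φ : R →+* PowerSeries R') (p : PowerSeries R) (K : ℕ)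
    (f : R[X]) (hf : ∀ k ≤ K, f.coeff k = coeff k p) :
    coeff K (substSeries φ p) = coeff K (f.eval₂ φ PowerSeries.X) := by
  rw [coeff_substSeries, coeff_eval₂_X]
  refine Finset.sum_congr rfl fun k hk => ?_
  rw [hf k (Nat.lt_succ_iff.1 (Finset.mem_range.1 hk))]

lemma substSeries_add (φ : R →+* PowerSeries R') (p q : PowerSeries R) :
    substSeries φ (p + q) = substSeries φ p + substSeries φ q := by
  ext K
  simp [coeff_substSeries, Finset.sum_add_distrib]

lemma substSeries_mul (φ : R →+* PowerSeries R') (p q : PowerSeries R) :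
    substSeries φ (p * q) = substSeries φ p * substSeries φ q := by
  ext K
  have htrunc : ∀ (r : PowerSeries R) (k : ℕ), k ≤ K → (trunc (K + 1) r).coeff k = coeff k r :=
    fun r k hk => by rw [coeff_trunc, if_pos (by omega)]
  rw [coeff_substSeries_eq_coeff_eval₂ φ _ K (trunc (K + 1) p * trunc (K + 1) q), eval₂_mul,
    PowerSeries.coeff_mul, PowerSeries.coeff_mul]
  · refine Finset.sum_congr rfl fun x hx => ?_
    rw [Finset.HasAntidiagonal.mem_antidiagonal] at hx
    rw [coeff_substSeries_eq_coeff_eval₂ φ p x.1 _ fun k hk => htrunc p k (by omega),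
      coeff_substSeries_eq_coeff_eval₂ φ q x.2 _ fun k hk => htrunc q k (by omega)]
  · intro k hk
    rw [Polynomial.coeff_mul, PowerSeries.coeff_mul]
    refine Finset.sum_congr rfl fun x hx => ?_
    rw [Finset.HasAntidiagonal.mem_antidiagonal] at hx
    rw [htrunc p x.1 (by omega), htrunc q x.2 (by omega)]

lemma substSeries_C (φ : R →+* PowerSeries R') (r : R) :
    substSeries φ (PowerSeries.C r) = φ r := by
  ext K
  rw [coeff_substSeries, Finset.sum_eq_single 0]
  · simp
  · intro k _ hk
    simp [PowerSeries.coeff_C, hk]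
  · simp

lemma substSeries_X (φ : R →+* PowerSeries R') :
    substSeries φ PowerSeries.X = PowerSeries.X := by
  ext K
  rw [coeff_substSeries_eq_coeff_eval₂ φ _ K Polynomial.X fun k _ => by
    simp [Polynomial.coeff_X, PowerSeries.coeff_X, eq_comm]]
  simp

def substSeriesHom (φ : R →+* PowerSeries R') : PowerSeries R →+* PowerSeries R' where
  toFun := substSeries φ
  map_one' := by rw [← map_one PowerSeries.C, substSeries_C, map_one]
  map_mul' := substSeries_mul φ
  map_zero' := by rw [← map_zero PowerSeries.C, substSeries_C, map_zero]
  map_add' := substSeries_add φ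

@[simp] lemma substSeriesHom_apply (φ : R →+* PowerSeries R') (p : PowerSeries R) :
    substSeriesHom φ p = substSeries φ p := rfl

lemma map_substSeries (σ : R' →+* R'') (φ : R →+* PowerSeries R') (p : PowerSeries R) :
    PowerSeries.map σ (substSeries φ p) = substSeries ((PowerSeries.map σ).comp φ) p := by
  ext K
  simp [coeff_substSeries]

lemma substSeries_C_comp (E : R →+* R') (p : PowerSeries R) :
    substSeries ((PowerSeries.C).comp E) p = PowerSeries.map E p := by
  ext K
  rw [coeff_substSeries, Finset.sum_eq_single K]
  · simp
  · intro k hk hkK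
    rw [RingHom.comp_apply, PowerSeries.coeff_C, if_neg (by simp at hk; omega)]
  · simp

end SubstSeries

section Modes

open PowerSeries

lemma zUnit_zpow (R : Type) [CommRing R] (m : ℤ) :
    ((zUnit R ^ m : (EpsSeries R)ˣ) : EpsSeries R)
      = PowerSeries.C (AddMonoidAlgebra.single m (1 : R)) := by
  induction m using Int.induction_on with
  | zero => rw [zpow_zero, Units.val_one, ← AddMonoidAlgebra.one_def, map_one]
  | succ k ih =>
    rw [zpow_add_one, Units.val_mul, ih]
    change _ * PowerSeries.C _ = _
    rw [← map_mul, AddMonoidAlgebra.single_mul_single, mul_one]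
  | pred k ih =>
    rw [zpow_sub_one, Units.val_mul, ih]
    change _ * PowerSeries.C _ = _
    rw [← map_mul, AddMonoidAlgebra.single_mul_single, mul_one, sub_eq_add_neg]

variable {R R' : Type} [CommRing R] [CommRing R']

lemma singleZeroRingHom_mul_single (r : R) (m : ℤ) :
    AddMonoidAlgebra.singleZeroRingHom r * AddMonoidAlgebra.single m (1 : R)
      = AddMonoidAlgebra.single m r := by
  change AddMonoidAlgebra.single 0 r * _ = _
  rw [AddMonoidAlgebra.single_mul_single, mul_one, zero_add]

/-- Lift of a coefficient substitution `φ : R →+* R'[[ε]]` to Fourier sums: each mode `e^{imt}`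
is kept and its coefficient is substituted. -/
def modeLift (φ : R →+* PowerSeries R') : ModeRing R →+* EpsSeries R' :=
  AddMonoidAlgebra.liftNCRingHom
    ((PowerSeries.map AddMonoidAlgebra.singleZeroRingHom).comp φ)
    ((Units.coeHom _).comp (zpowersHom _ (zUnit R')))
    (fun _ _ => Commute.all _ _)

lemma modeLift_single (φ : R →+* PowerSeries R') (m : ℤ) (r : R) :
    modeLift φ (AddMonoidAlgebra.single m r)
      = PowerSeries.map AddMonoidAlgebra.singleZeroRingHom (φ r)
        * PowerSeries.C (AddMonoidAlgebra.single m (1 : R')) := by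
  rw [← zUnit_zpow]
  exact AddMonoidAlgebra.liftNC_single _ _ _ _

lemma coeff_modeLift (φ : R →+* PowerSeries R') (w : ModeRing R) (k : ℕ) (m : ℤ) :
    (coeff k (modeLift φ w)).coeff m = coeff k (φ (w.coeff m)) := by
  induction w using AddMonoidAlgebra.induction_linear with
  | zero => simp
  | add f g hf hg => simp only [map_add, AddMonoidAlgebra.coeff_add, Finsupp.add_apply, hf, hg]
  | single a r =>
    rw [modeLift_single, PowerSeries.coeff_mul_C, PowerSeries.coeff_map,
      singleZeroRingHom_mul_single]
    simp only [AddMonoidAlgebra.coeff_single, Finsupp.single_apply]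
    split_ifs <;> simp

def modeCoeff (q : EpsSeries R) (m : ℤ) : PowerSeries R :=
  PowerSeries.mk fun k => (coeff k q).coeff m

lemma coeff_modeCoeff (q : EpsSeries R) (m : ℤ) (k : ℕ) :
    coeff k (modeCoeff q m) = (coeff k q).coeff m :=
  PowerSeries.coeff_mk _ _

lemma modeCoeff_substSeries_modeLift (φ : R →+* PowerSeries R') (q : EpsSeries R) (m : ℤ) :
    modeCoeff (substSeries (modeLift φ) q) m = substSeries φ (modeCoeff q m) := by
  ext K
  simp only [coeff_modeCoeff, coeff_substSeries, AddMonoidAlgebra.coeff_sum,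
    Finsupp.finsetSum_apply, coeff_modeLift]

variable [Algebra ℂ R] [Algebra ℂ R']

lemma zEval_single (m : ℤ) (c : ℂ) :
    zEval R (AddMonoidAlgebra.single m c)
      = PowerSeries.C (AddMonoidAlgebra.single m (algebraMap ℂ R c)) := by
  change AddMonoidAlgebra.liftNC _ _ _ = _
  rw [AddMonoidAlgebra.liftNC_single]
  change PowerSeries.C _ * ((zUnit R ^ m : (EpsSeries R)ˣ) : EpsSeries R) = _
  rw [zUnit_zpow, ← map_mul, RingHom.comp_apply, singleZeroRingHom_mul_single]

variable (φ : R →+* PowerSeries R')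
  (hφ : ∀ c : ℂ, φ (algebraMap ℂ R c) = PowerSeries.C (algebraMap ℂ R' c))
include hφ

lemma substSeries_modeLift_zEval (x : AddMonoidAlgebra ℂ ℤ) :
    substSeries (modeLift φ) (zEval R x) = zEval R' x := by
  induction x using AddMonoidAlgebra.induction_linear with
  | zero => rw [map_zero, map_zero, ← substSeriesHom_apply, map_zero]
  | add f g hf hg => rw [map_add, map_add, substSeries_add, hf, hg]
  | single a c =>
    rw [zEval_single, substSeries_C, zEval_single, modeLift_single, hφ, PowerSeries.map_C,
      ← map_mul, singleZeroRingHom_mul_single]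

lemma substSeries_modeLift_VEval {n : ℕ}
    (V : MvPolynomial (Fin n) (Polynomial (AddMonoidAlgebra ℂ ℤ))) (y : Fin n → EpsSeries R) :
    substSeries (modeLift φ) (VEval R V y)
      = VEval R' V (fun i => substSeries (modeLift φ) (y i)) := by
  have hcoeff : (substSeriesHom (modeLift φ)).comp (eval₂RingHom (zEval R) PowerSeries.X)
      = eval₂RingHom (zEval R') PowerSeries.X := by
    refine Polynomial.ringHom_ext (fun a => ?_) ?_
    · simpa using substSeries_modeLift_zEval φ hφ a
    · simpa using substSeries_X (modeLift φ)
  rw [← substSeriesHom_apply, VEval, MvPolynomial.eval₂_comp_left, hcoeff]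
  rfl

end Modes

section TimeDerivative

open PowerSeries

variable {R : Type} [CommRing R] {σ τ : Type}

def pdCoeff (i : σ) (q : PowerSeries (MvPolynomial σ R)) : PowerSeries (MvPolynomial σ R) :=
  PowerSeries.mk fun k => MvPolynomial.pderiv i (coeff k q)

lemma coeff_pdCoeff (i : σ) (q : PowerSeries (MvPolynomial σ R)) (k : ℕ) :
    coeff k (pdCoeff i q) = MvPolynomial.pderiv i (coeff k q) :=
  PowerSeries.coeff_mk _ _

lemma pdCoeff_add (i : σ) (p q : PowerSeries (MvPolynomial σ R)) :
    pdCoeff i (p + q) = pdCoeff i p + pdCoeff i q := by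
  ext k
  simp only [coeff_pdCoeff, map_add]

lemma pdCoeff_mul (i : σ) (p q : PowerSeries (MvPolynomial σ R)) :
    pdCoeff i (p * q) = pdCoeff i p * q + p * pdCoeff i q := by
  ext k
  simp only [coeff_pdCoeff, PowerSeries.coeff_mul, map_add, map_sum, MvPolynomial.pderiv_mul,
    Finset.sum_add_distrib]

lemma pdCoeff_C (i : σ) (x : MvPolynomial σ R) :
    pdCoeff i (PowerSeries.C x) = PowerSeries.C (MvPolynomial.pderiv i x) := by
  ext k
  rw [coeff_pdCoeff, PowerSeries.coeff_C, PowerSeries.coeff_C]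
  split_ifs <;> simp

lemma pdCoeff_comp_of_X (φ : MvPolynomial σ R →+* PowerSeries (MvPolynomial τ R)) (i : σ) (i' : τ)
    (hC : ∀ c, φ (MvPolynomial.C c) = PowerSeries.C (MvPolynomial.C c))
    (hX : ∀ v, pdCoeff i' (φ (MvPolynomial.X v)) = φ (MvPolynomial.pderiv i (MvPolynomial.X v)))
    (p : MvPolynomial σ R) :
    pdCoeff i' (φ p) = φ (MvPolynomial.pderiv i p) := by
  induction p using MvPolynomial.induction_on with
  | C c => rw [hC, pdCoeff_C, MvPolynomial.pderiv_C, MvPolynomial.pderiv_C, map_zero, map_zero]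
  | add p q hp hq => rw [map_add, pdCoeff_add, hp, hq, map_add, map_add]
  | mul_X p v hp =>
    rw [map_mul, pdCoeff_mul, hp, hX, MvPolynomial.pderiv_mul, map_add, map_mul, map_mul]

lemma substSeries_pdCoeff (φ : MvPolynomial σ R →+* PowerSeries (MvPolynomial τ R)) (i : σ)
    (i' : τ) (hφ : ∀ p, pdCoeff i' (φ p) = φ (MvPolynomial.pderiv i p))
    (q : PowerSeries (MvPolynomial σ R)) :
    substSeries φ (pdCoeff i q) = pdCoeff i' (substSeries φ q) := by
  ext K
  simp only [coeff_pdCoeff, coeff_substSeries, map_sum, ← hφ]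

lemma pderiv_rename_of_notMem_range {f : σ → τ} {i : τ} (hi : i ∉ Set.range f)
    (p : MvPolynomial σ R) :
    MvPolynomial.pderiv i (MvPolynomial.rename f p) = 0 := by
  classical
  refine MvPolynomial.pderiv_eq_zero_of_notMem_vars fun h => ?_
  obtain ⟨j, -, rfl⟩ := MvPolynomial.mem_vars_rename f p h
  exact hi ⟨j, rfl⟩

end TimeDerivative

section ScalarODE

variable {R : Type} [CommRing R] {σ : Type}

lemma MvPolynomial.optionEquivLeft_pderiv_none (d : MvPolynomial (Option σ) R) :
    optionEquivLeft R σ (pderiv none d) = derivative (optionEquivLeft R σ d) := by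
  induction d using MvPolynomial.induction_on with
  | C a => rw [pderiv_C, map_zero, optionEquivLeft_C, derivative_C]
  | add p q hp hq => rw [map_add, map_add, hp, hq, map_add, derivative_add]
  | mul_X p v hp =>
    rw [pderiv_mul, map_add, map_mul, map_mul, map_mul, hp, derivative_mul]
    cases v with
    | none => rw [pderiv_X_self, map_one, optionEquivLeft_X_none, derivative_X]
    | some i =>
      rw [pderiv_X_of_ne (by simp), map_zero, optionEquivLeft_X_some, derivative_C]

lemma MvPolynomial.optionEquivLeft_rename_some (c : MvPolynomial σ R) :
    optionEquivLeft R σ (rename some c) = Polynomial.C c := by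
  induction c using MvPolynomial.induction_on with
  | C a => rw [rename_C, optionEquivLeft_C]
  | add p q hp hq => rw [map_add, map_add, hp, hq, map_add]
  | mul_X p i hp => rw [map_mul, rename_X, map_mul, optionEquivLeft_X_some, hp, ← map_mul]

variable [IsDomain R] [CharZero R]

lemma Polynomial.eq_zero_of_derivative_add_C_mul_eq_zero {a : R} (ha : a ≠ 0) {q : R[X]}
    (h : derivative q + C a * q = 0) : q = 0 := by
  have hdeg : q.natDegree = 0 := by
    have := congrArg natDegree (eq_neg_of_add_eq_zero_left h)
    rw [natDegree_derivative, natDegree_neg, natDegree_C_mul ha] at this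
    omega
  rw [derivative_eq_zero.2 hdeg, zero_add, mul_eq_zero, C_eq_zero] at h
  exact h.resolve_left ha

lemma MvPolynomial.eq_zero_of_pderiv_add_C_mul_eq_zero {a : R} (ha : a ≠ 0)
    {d : MvPolynomial (Option σ) R} (h : pderiv none d + C a * d = 0) : d = 0 := by
  have h' := congrArg (optionEquivLeft R σ) h
  rw [map_add, map_mul, optionEquivLeft_pderiv_none, optionEquivLeft_C, map_zero] at h'
  simpa using Polynomial.eq_zero_of_derivative_add_C_mul_eq_zero (by simpa using ha) h'

lemma MvPolynomial.exists_rename_some_of_pderiv_eq_zero {d : MvPolynomial (Option σ) R}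
    (h : pderiv none d = 0) : ∃ c, d = rename some c := by
  refine ⟨(optionEquivLeft R σ d).coeff 0, (optionEquivLeft R σ).injective ?_⟩
  rw [optionEquivLeft_rename_some]
  apply Polynomial.eq_C_of_derivative_eq_zero
  rw [← optionEquivLeft_pderiv_none, h, map_zero]

end ScalarODE

section FormalSolution

open PowerSeries

variable {n : ℕ} (mvec : Fin n → ℤ)
  (V : Fin n → MvPolynomial (Fin n) (Polynomial (AddMonoidAlgebra ℂ ℤ)))

/-- The mode equations of part (d) of `IsSecularFamily`, for amplitudes that are polynomials in the
time `t` (the variable `none`) and in further variables indexed by `σ`. -/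
def IsFormalSolution {σ : Type} (Y : Fin n → EpsSeries (MvPolynomial (Option σ) ℂ)) : Prop :=
  ∀ j m, pdCoeff none (modeCoeff (Y j) m)
      + PowerSeries.C (MvPolynomial.C (Complex.I * ((m : ℂ) - mvec j))) * modeCoeff (Y j) m
    = modeCoeff (PowerSeries.X * VEval _ (V j) Y) m

variable {mvec V}

lemma IsSecularFamily.isFormalSolution {Q : Fin n → EpsSeries (AmpRing n)}
    (hQ : IsSecularFamily mvec V Q) : IsFormalSolution mvec V Q := by
  intro j m
  have hpd : pdCoeff none (modeCoeff (Q j) m)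
      = PowerSeries.mk fun k => MvPolynomial.pderiv none ((coeff k (Q j)).coeff m) := by
    ext k
    rw [coeff_pdCoeff, coeff_modeCoeff, PowerSeries.coeff_mk]
  rw [hpd]
  exact hQ.ode j m

variable {σ τ : Type}

theorem IsFormalSolution.substSeries_modeLift {Y : Fin n → EpsSeries (MvPolynomial (Option σ) ℂ)}
    (hY : IsFormalSolution mvec V Y)
    (φ : MvPolynomial (Option σ) ℂ →+* PowerSeries (MvPolynomial (Option τ) ℂ))
    (hC : ∀ c, φ (MvPolynomial.C c) = PowerSeries.C (MvPolynomial.C c))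
    (hd : ∀ p, pdCoeff none (φ p) = φ (MvPolynomial.pderiv none p)) :
    IsFormalSolution mvec V fun i => substSeries (modeLift φ) (Y i) := by
  intro j m
  have h := congrArg (substSeries φ) (hY j m)
  rw [substSeries_add, substSeries_pdCoeff φ none none hd, substSeries_mul, substSeries_C,
    hC] at h
  simp only [← modeCoeff_substSeries_modeLift] at h
  rwa [substSeries_mul, substSeries_X,
    substSeries_modeLift_VEval φ (fun c => hC c) (V j)] at h

end FormalSolution

section Uniqueness

open PowerSeries

lemma MvPolynomial.eval₂_sub_eval₂_mem {R S σ : Type} [CommSemiring R] [CommRing S]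
    (f : R →+* S) (I : Ideal S) {x y : σ → S} (h : ∀ i, x i - y i ∈ I) (p : MvPolynomial σ R) :
    p.eval₂ f x - p.eval₂ f y ∈ I := by
  rw [← Ideal.Quotient.eq, eval₂_comp_left, eval₂_comp_left]
  congr 1
  funext i
  exact Ideal.Quotient.eq.2 (h i)

lemma coeff_X_mul_VEval_eq {R : Type} [CommRing R] [Algebra ℂ R] {n : ℕ}
    (V : MvPolynomial (Fin n) (Polynomial (AddMonoidAlgebra ℂ ℤ))) {y y' : Fin n → EpsSeries R}
    {K : ℕ} (h : ∀ i, ∀ k < K, coeff k (y i) = coeff k (y' i)) :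
    coeff K (PowerSeries.X * VEval R V y) = coeff K (PowerSeries.X * VEval R V y') := by
  have hy : ∀ i, y i - y' i ∈ Ideal.span {PowerSeries.X ^ K} := fun i =>
    Ideal.mem_span_singleton.2 <| PowerSeries.X_pow_dvd_iff.2 fun k hk => by
      rw [map_sub, h i k hk, sub_self]
  obtain ⟨r, hr⟩ := Ideal.mem_span_singleton.1 (MvPolynomial.eval₂_sub_eval₂_mem _ _ hy V)
  rw [← sub_eq_zero, ← map_sub, ← mul_sub, VEval, VEval, hr, ← mul_assoc, ← pow_succ',
    PowerSeries.coeff_X_pow_mul', if_neg (by omega)]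

variable {n : ℕ} {mvec : Fin n → ℤ}
  {V : Fin n → MvPolynomial (Fin n) (Polynomial (AddMonoidAlgebra ℂ ℤ))}
  {σ : Type} {Y Y' : Fin n → EpsSeries (MvPolynomial (Option σ) ℂ)}

lemma IsFormalSolution.pderiv_coeff_add (hY : IsFormalSolution mvec V Y) (j : Fin n) (m : ℤ)
    (K : ℕ) :
    MvPolynomial.pderiv none (coeff K (modeCoeff (Y j) m))
        + MvPolynomial.C (Complex.I * ((m : ℂ) - mvec j)) * coeff K (modeCoeff (Y j) m)
      = coeff K (modeCoeff (PowerSeries.X * VEval _ (V j) Y) m) := by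
  simpa only [map_add, coeff_pdCoeff, PowerSeries.coeff_C_mul] using
    congrArg (PowerSeries.coeff K) (hY j m)

theorem IsFormalSolution.eq_of_map_resonant_eq {S : Type} [CommRing S]
    (hY : IsFormalSolution mvec V Y) (hY' : IsFormalSolution mvec V Y')
    (ρ : MvPolynomial (Option σ) ℂ →+* S)
    (hρ : Function.Injective fun c => ρ (MvPolynomial.rename some c))
    (h : ∀ j, PowerSeries.map ρ (modeCoeff (Y j) (mvec j))
      = PowerSeries.map ρ (modeCoeff (Y' j) (mvec j))) :
    Y = Y' := by
  suffices hK : ∀ K j m, coeff K (modeCoeff (Y j) m) = coeff K (modeCoeff (Y' j) m) by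
    funext j
    ext K m : 2
    simpa only [coeff_modeCoeff] using hK K j m
  intro K
  induction K using Nat.strong_induction_on with
  | _ K IH =>
  intro j m
  have hV : coeff K (modeCoeff (PowerSeries.X * VEval _ (V j) Y) m)
      = coeff K (modeCoeff (PowerSeries.X * VEval _ (V j) Y') m) := by
    rw [coeff_modeCoeff, coeff_modeCoeff, coeff_X_mul_VEval_eq (V j) fun i k hk => ?_]
    ext m' : 1
    simpa only [coeff_modeCoeff] using IH k hk i m'
  set d := coeff K (modeCoeff (Y j) m) - coeff K (modeCoeff (Y' j) m) with hd_def
  have hd : MvPolynomial.pderiv none d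
      + MvPolynomial.C (Complex.I * ((m : ℂ) - mvec j)) * d = 0 := by
    rw [map_sub, mul_sub]
    linear_combination hY.pderiv_coeff_add j m K - hY'.pderiv_coeff_add j m K + hV
  rw [← sub_eq_zero, ← hd_def]
  rcases eq_or_ne m (mvec j) with rfl | hm
  · rw [sub_self, mul_zero, map_zero, zero_mul, add_zero] at hd
    obtain ⟨c, hc⟩ := MvPolynomial.exists_rename_some_of_pderiv_eq_zero hd
    have hρd : ρ (MvPolynomial.rename some c) = ρ (MvPolynomial.rename some 0) := by
      rw [← hc, hd_def, map_zero, map_zero, map_sub, sub_eq_zero]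
      simpa only [PowerSeries.coeff_map] using congrArg (PowerSeries.coeff K) (h j)
    rw [hc, hρ hρd, map_zero]
  · refine MvPolynomial.eq_zero_of_pderiv_add_C_mul_eq_zero ?_ hd
    exact mul_ne_zero Complex.I_ne_zero (sub_ne_zero.2 (by exact_mod_cast hm))

end Uniqueness

section Flow

variable {n : ℕ} {mvec : Fin n → ℤ}
  {V : Fin n → MvPolynomial (Fin n) (Polynomial (AddMonoidAlgebra ℂ ℤ))}
  {Q : Fin n → EpsSeries (AmpRing n)}

/-- The substitution `t ↦ s` on `ℂ[t,s,A]`. -/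
def setTToS (n : ℕ) : AmpRing2 n →+* AmpRing2 n :=
  (MvPolynomial.rename fun w : Option (Option (Fin n)) => w.elim (some none) some).toRingHom

/-- The substitution `t ↦ 0`, `s ↦ t` from `ℂ[t,s,A]` to `ℂ[t,A]`. -/
def setTZeroSToT (n : ℕ) : AmpRing2 n →+* AmpRing n :=
  (MvPolynomial.aeval fun w : Option (Option (Fin n)) => w.elim 0 MvPolynomial.X).toRingHom

lemma setTToS_comp_renameTS : (setTToS n).comp renameTS = renameTS := by
  refine MvPolynomial.ringHom_ext (fun c => ?_) fun v => ?_
  · simp [setTToS, renameTS]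
  · cases v <;> simp [setTToS, renameTS]

lemma setTToS_comp_embedTA : (setTToS n).comp embedTA = renameTS := by
  refine MvPolynomial.ringHom_ext (fun c => ?_) fun v => ?_
  · simp [setTToS, embedTA, renameTS]
  · cases v <;> simp [setTToS, embedTA, renameTS]

lemma injective_setTToS_rename_some :
    Function.Injective fun c : AmpRing n => setTToS n (MvPolynomial.rename some c) := by
  have h : ∀ c : AmpRing n, setTToS n (MvPolynomial.rename some c) = MvPolynomial.rename some c :=
    fun c => by simp [setTToS, MvPolynomial.rename_rename, Function.comp_def]
  simpa only [h] using MvPolynomial.rename_injective _ (Option.some_injective _)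

lemma setTZeroSToT_comp_renameTS : (setTZeroSToT n).comp renameTS = RingHom.id _ := by
  refine MvPolynomial.ringHom_ext (fun c => ?_) fun v => ?_
  · simp [setTZeroSToT, renameTS]
  · cases v <;> simp [setTZeroSToT, renameTS]

lemma pderiv_none_renameTS (p : AmpRing n) : MvPolynomial.pderiv none (renameTS p) = 0 := by
  refine pderiv_rename_of_notMem_range ?_ p
  rintro ⟨v, hv⟩
  cases v <;> simp at hv

lemma substTA_C (c : ℂ) :
    substTA mvec Q (MvPolynomial.C c) = PowerSeries.C (MvPolynomial.C c) :=
  MvPolynomial.eval₂Hom_C _ _ _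

lemma substTA_X_none :
    substTA mvec Q (MvPolynomial.X none)
      = PowerSeries.C (MvPolynomial.X none - MvPolynomial.X (some none)) :=
  MvPolynomial.eval₂Hom_X' _ _ _

lemma substTA_X_some (i : Fin n) :
    substTA mvec Q (MvPolynomial.X (some i)) = renAmpS mvec Q i :=
  MvPolynomial.eval₂Hom_X' _ _ _

lemma pdCoeff_substTA (p : AmpRing n) :
    pdCoeff none (substTA mvec Q p) = substTA mvec Q (MvPolynomial.pderiv none p) := by
  refine pdCoeff_comp_of_X _ none none substTA_C (fun v => ?_) p
  cases v with
  | none =>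
    rw [substTA_X_none, pdCoeff_C, map_sub, MvPolynomial.pderiv_X_self,
      MvPolynomial.pderiv_X_of_ne (by simp), sub_zero, MvPolynomial.pderiv_X_self, map_one, map_one]
  | some i =>
    rw [substTA_X_some, MvPolynomial.pderiv_X_of_ne (by simp), map_zero]
    ext k
    rw [coeff_pdCoeff, renAmpS, PowerSeries.coeff_map, map_zero, pderiv_none_renameTS]

lemma pdCoeff_C_embedTA (p : AmpRing n) :
    pdCoeff none (PowerSeries.C (embedTA p))
      = PowerSeries.C (embedTA (MvPolynomial.pderiv none p)) := by
  rw [pdCoeff_C]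
  congr 1
  exact MvPolynomial.pderiv_rename (Option.map_injective (Option.some_injective (Fin n)))
    (none : Option (Fin n)) p

lemma Pc_eq_modeCoeff (j : Fin n) (m : ℤ) : Pc Q j m = modeCoeff (Q j) m := rfl

lemma IsSecularFamily.substSeries_Pc_resonant {R' : Type} [CommRing R']
    (hQ : IsSecularFamily mvec V Q) (ψ : AmpRing n →+* PowerSeries R')
    (hψ : ψ (MvPolynomial.X none) = 0) (j : Fin n) :
    substSeries ψ (Pc Q j (mvec j)) = ψ (MvPolynomial.X (some j)) := by
  have hψ0 : ∀ p, ψ (MvPolynomial.aeval (fun v : Option (Fin n) =>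
      v.elim (0 : AmpRing n) fun i => MvPolynomial.X (some i)) p) = ψ p := by
    intro p
    induction p using MvPolynomial.induction_on with
    | C c => simp
    | add p q hp hq => simp only [map_add, hp, hq]
    | mul_X p v hp =>
      rw [map_mul, map_mul, map_mul, hp]
      cases v <;> simp [hψ]
  ext K
  rw [coeff_substSeries, Finset.sum_eq_single 0]
  · rw [Nat.sub_zero, Pc, PowerSeries.coeff_mk, hQ.coeff_zero j, AddMonoidAlgebra.coeff_single,
      Finsupp.single_eq_same]
  · intro k _ hk
    rw [Pc, PowerSeries.coeff_mk, ← hψ0, hQ.resonant_vanish j k (Nat.one_le_iff_ne_zero.2 hk),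
      map_zero, map_zero]
  · simp

/-- The flow property `P_{j,m}(ε, t - s, 𝒜(ε,s,A)) = P_{j,m}(ε, t, A)`. -/
theorem IsSecularFamily.substSeries_substTA (hQ : IsSecularFamily mvec V Q) (j : Fin n) (m : ℤ) :
    substSeries (substTA mvec Q) (Pc Q j m) = PowerSeries.map embedTA (Pc Q j m) := by
  have hflow : (fun i => substSeries (modeLift (substTA mvec Q)) (Q i))
      = fun i => substSeries (modeLift (PowerSeries.C.comp embedTA)) (Q i) := by
    refine IsFormalSolution.eq_of_map_resonant_eq
      (hQ.isFormalSolution.substSeries_modeLift _ substTA_C pdCoeff_substTA)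
      (hQ.isFormalSolution.substSeries_modeLift _ (fun c => by simp [embedTA])
        pdCoeff_C_embedTA)
      (setTToS n) injective_setTToS_rename_some fun i => ?_
    simp only [modeCoeff_substSeries_modeLift, map_substSeries, ← Pc_eq_modeCoeff]
    rw [hQ.substSeries_Pc_resonant _ (by simp [substTA, setTToS]) i, ← map_substSeries,
      substSeries_C_comp, RingHom.comp_apply, substTA_X_some, renAmpS,
      ← RingHom.comp_apply (PowerSeries.map _), ← RingHom.comp_apply (PowerSeries.map _),
      ← PowerSeries.map_comp, ← PowerSeries.map_comp, setTToS_comp_renameTS, setTToS_comp_embedTA]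
  have := congrArg (fun Y => modeCoeff (Y j) m) hflow
  simpa only [modeCoeff_substSeries_modeLift, substSeries_C_comp, Pc_eq_modeCoeff] using this

lemma map_setTZeroSToT_comp_substTA :
    (PowerSeries.map (setTZeroSToT n)).comp (substTA mvec Q) = substInv mvec Q := by
  refine MvPolynomial.ringHom_ext (fun c => ?_) fun v => ?_
  · simp [substTA_C, substInv, setTZeroSToT]
  · cases v with
    | none => simp [substTA_X_none, substInv, setTZeroSToT]
    | some i =>
      rw [RingHom.comp_apply, substTA_X_some, renAmpS, ← RingHom.comp_apply (PowerSeries.map _),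
        ← PowerSeries.map_comp, setTZeroSToT_comp_renameTS, PowerSeries.map_id]
      simp [substInv]

end Flow

theorem bare_amplitude_inversion_general {n : ℕ} (mvec : Fin n → ℤ)
    (V : Fin n → MvPolynomial (Fin n) (Polynomial (AddMonoidAlgebra ℂ ℤ)))
    (Q : Fin n → EpsSeries (AmpRing n))
    (hQ : IsSecularFamily mvec V Q) :
    ∀ j : Fin n,
      substSeries (substInv mvec Q) (Pc Q j (mvec j))
        = PowerSeries.C (R := AmpRing n) (MvPolynomial.X (some j)) := by
  intro j
  calc substSeries (substInv mvec Q) (Pc Q j (mvec j))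
      = PowerSeries.map (setTZeroSToT n) (substSeries (substTA mvec Q) (Pc Q j (mvec j))) := by
        rw [map_substSeries, map_setTZeroSToT_comp_substTA]
    _ = substSeries (PowerSeries.C.comp ((setTZeroSToT n).comp embedTA)) (Pc Q j (mvec j)) := by
        rw [hQ.substSeries_substTA, substSeries_C_comp, ← RingHom.comp_apply (PowerSeries.map _),
          ← PowerSeries.map_comp]
    _ = PowerSeries.C (MvPolynomial.X (some j)) := by
        rw [hQ.substSeries_Pc_resonant _ (by simp [setTZeroSToT, embedTA]) j]
        simp [setTZeroSToT, embedTA]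

/-- explicit inversion between bare and renormalized amplitudes,
semisimple case: `P_{j,m_j}(ε, -t, 𝒜(ε, t, A)) = A_j` in `ℂ[t,A][[ε]]`. -/
theorem bare_amplitude_inversion {n : ℕ} (hn : 0 < n) (mvec : Fin n → ℤ)
    (V : Fin n → MvPolynomial (Fin n) (Polynomial (AddMonoidAlgebra ℂ ℤ)))
    (Q : Fin n → EpsSeries (AmpRing n))
    (hQ : IsSecularFamily mvec V Q) :
    ∀ j : Fin n,
      substSeries (substInv mvec Q) (Pc Q j (mvec j))
        = PowerSeries.C (R := AmpRing n) (MvPolynomial.X (some j)) :=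
  bare_amplitude_inversion_general mvec V Q hQ
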